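/- arXiv:2303.14942 — 2 statements merged into one kernel-verified Lean document; each statement's English description precedes it below -/
import Mathlib

section
/- Suppose the eigenvalues satisfy c·i^{-β} ≤ λ_i ≤ C·i^{-β} for all i ≥ 1, some β > 1 and constants c, C > 0. Then the effective dimension N(ν) = Σ_{i=1}^∞ λ_i/(λ_i + ν^{-1}) satisfies C₂·ν^{1/β} ≤ N(ν) ≤ C₁·ν^{1/β} for all ν ≥ 1, with constants C₁, C₂ depending only on c, C, β. -/
open Real Set Filter

open scoped ENNReal

lemma lemB {β : ℝ} (hβ : 1 < β) {x : ℝ} (hx : 2 ≤ x) :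
    (β - 1) * x ^ (-β) ≤ (x - 1) ^ (1 - β) - x ^ (1 - β) := by
  have h1 : (1:ℝ) ≤ x - 1 := by linarith
  have hx0 : (0:ℝ) < x := by linarith
  have hlt : x - 1 < x := by linarith
  obtain ⟨ξ, hξ, hslope⟩ := exists_hasDerivAt_eq_slope (fun y => y ^ (1 - β))
    (fun y => (1 - β) * y ^ (1 - β - 1)) hlt
    (by
      apply ContinuousOn.rpow_const continuousOn_id
      intro y hy; left; simp only [id]
      intro h; rw [h] at hy; simp [Icc] at hy; linarith [hy.1])
    (fun y hy => Real.hasDerivAt_rpow_const (Or.inl (by simp [Ioo] at hy; nlinarith [hy.1])))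
  have hξpos : 0 < ξ := by simp [Ioo] at hξ; linarith [hξ.1]
  have hexp : 1 - β - 1 = -β := by ring
  rw [hexp] at hslope
  have : x ^ (1 - β) - (x - 1) ^ (1 - β) = (1 - β) * ξ ^ (-β) := by
    rw [hslope]; ring_nf
  have hmono : x ^ (-β) ≤ ξ ^ (-β) :=
    Real.rpow_le_rpow_of_nonpos hξpos (by simp [Ioo] at hξ; linarith [hξ.2]) (by linarith)
  nlinarith [Real.rpow_nonneg hx0.le (-β)]

lemma lemC {β : ℝ} (hβ : 1 < β) {n : ℕ} (hn : 1 ≤ n) :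
    HasSum (fun i : ℕ => ((i + n : ℕ) : ℝ) ^ (1 - β) - ((i + n + 1 : ℕ) : ℝ) ^ (1 - β))
      ((n : ℝ) ^ (1 - β)) := by
  have hnonneg : ∀ i : ℕ, 0 ≤ ((i + n : ℕ) : ℝ) ^ (1 - β) - ((i + n + 1 : ℕ) : ℝ) ^ (1 - β) := by
    intro i
    have hpos : (0:ℝ) < ((i + n : ℕ) : ℝ) := by
      have : 1 ≤ i + n := le_add_left hn
      exact_mod_cast Nat.lt_of_lt_of_le Nat.zero_lt_one this
    have hle : ((i + n : ℕ) : ℝ) ≤ ((i + n + 1 : ℕ) : ℝ) := by push_cast; linarith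
    have := Real.rpow_le_rpow_of_nonpos hpos hle (by linarith : 1 - β ≤ 0)
    linarith
  rw [hasSum_iff_tendsto_nat_of_nonneg hnonneg]
  have hten : Tendsto (fun N : ℕ => ((N + n : ℕ) : ℝ) ^ (1 - β)) atTop (nhds 0) := by
    have h1 : Tendsto (fun x : ℝ => x ^ (1 - β)) atTop (nhds 0) := by
      have := tendsto_rpow_neg_atTop (by linarith : (0:ℝ) < β - 1)
      have he : -(β - 1) = 1 - β := by ring
      rwa [he] at this
    have h2 : Tendsto (fun N : ℕ => ((N + n : ℕ) : ℝ)) atTop atTop := by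
      apply tendsto_natCast_atTop_atTop.comp
      exact tendsto_atTop_atTop_of_monotone (fun a b h => Nat.add_le_add_right h n)
        (fun b => ⟨b, Nat.le_add_right b n⟩)
    exact h1.comp h2
  have heq : ∀ N : ℕ, ∑ i ∈ Finset.range N,
      (((i + n : ℕ) : ℝ) ^ (1 - β) - ((i + n + 1 : ℕ) : ℝ) ^ (1 - β))
      = (n : ℝ) ^ (1 - β) - ((N + n : ℕ) : ℝ) ^ (1 - β) := by
    intro N
    have := Finset.sum_range_sub' (fun i : ℕ => ((i + n : ℕ) : ℝ) ^ (1 - β)) N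
    rw [Finset.sum_congr rfl (fun i _ => by rw [show i + n + 1 = i + 1 + n from by omega]), this]
    norm_num
  simp only [heq]
  simpa using tendsto_const_nhds.sub hten

lemma sumShift {β : ℝ} (hβ : 1 < β) (n : ℕ) :
    Summable (fun i : ℕ => ((i + n : ℕ) : ℝ) ^ (-β)) := by
  have h : Summable (fun i : ℕ => (i : ℝ) ^ (-β)) :=
    Real.summable_nat_rpow.2 (by linarith)
  exact ((summable_nat_add_iff n).2 h).congr (fun i => by push_cast; ring_nf)

lemma lemA {β : ℝ} (hβ : 1 < β) {n : ℕ} (hn : 1 ≤ n) :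
    (∑' i : ℕ, ((i + n + 1 : ℕ) : ℝ) ^ (-β)) ≤ (n : ℝ) ^ (1 - β) / (β - 1) := by
  have hb1 : (0:ℝ) < β - 1 := by linarith
  have hsum : Summable (fun i : ℕ => ((i + n + 1 : ℕ) : ℝ) ^ (-β)) := by
    have := sumShift hβ (n + 1)
    exact this.congr (fun i => by norm_num [Nat.add_assoc])
  have hle : ∀ i : ℕ, ((i + n + 1 : ℕ) : ℝ) ^ (-β)
      ≤ (((i + n : ℕ) : ℝ) ^ (1 - β) - ((i + n + 1 : ℕ) : ℝ) ^ (1 - β)) / (β - 1) := by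
    intro i
    have hx : (2:ℝ) ≤ ((i + n + 1 : ℕ) : ℝ) := by
      have : 1 ≤ i + n := le_add_left hn
      push_cast; exact_mod_cast by omega
    have := lemB hβ hx
    have hsub : ((i + n + 1 : ℕ) : ℝ) - 1 = ((i + n : ℕ) : ℝ) := by push_cast; ring
    rw [hsub] at this
    rw [le_div_iff₀ hb1]
    linarith
  have htel := (lemC hβ hn).div_const (β - 1)
  calc (∑' i : ℕ, ((i + n + 1 : ℕ) : ℝ) ^ (-β))
      ≤ ∑' i : ℕ, (((i + n : ℕ) : ℝ) ^ (1 - β) - ((i + n + 1 : ℕ) : ℝ) ^ (1 - β)) / (β - 1) :=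
        Summable.tsum_le_tsum hle hsum htel.summable
    _ = (n : ℝ) ^ (1 - β) / (β - 1) := htel.tsum_eq

/-- If the eigenvalues satisfy `c * i^(-β) ≤ λ_i ≤ C * i^(-β)` for all `i ≥ 1`, with `β > 1`,
then the effective dimension `N(ν) = ∑_{i≥1} λ_i / (λ_i + ν⁻¹)` satisfies
`C₂ * ν^(1/β) ≤ N(ν) ≤ C₁ * ν^(1/β)` for all `ν ≥ 1`. -/
theorem stmt_1 (lam : ℕ → ℝ) (β c C : ℝ) (hβ : 1 < β) (hc : 0 < c) (hC : 0 < C)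
    (hlow : ∀ i : ℕ, 1 ≤ i → c * (i : ℝ) ^ (-β) ≤ lam i)
    (hup : ∀ i : ℕ, 1 ≤ i → lam i ≤ C * (i : ℝ) ^ (-β)) :
    ∃ C₁ C₂ : ℝ, 0 < C₁ ∧ 0 < C₂ ∧ ∀ ν : ℝ, 1 ≤ ν →
      C₂ * ν ^ (1 / β) ≤ (∑' i : {i : ℕ // 1 ≤ i}, lam i / (lam i + ν⁻¹)) ∧
      (∑' i : {i : ℕ // 1 ≤ i}, lam i / (lam i + ν⁻¹)) ≤ C₁ * ν ^ (1 / β) := by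
  have hβ0 : (0:ℝ) < β := by linarith
  have hb1 : (0:ℝ) < β - 1 := by linarith
  refine ⟨3 + C / (β - 1), min (c ^ (1/β) * c / (2 * (C + 1))) (c ^ (1/β) / 4),
    by positivity, by positivity, fun ν hν => ?_⟩
  have hνpos : (0:ℝ) < ν := by linarith
  have hνinv : (0:ℝ) < ν⁻¹ := by positivity
  have hνinv1 : ν⁻¹ ≤ 1 := by
    rw [inv_le_one_iff₀]; right; exact hν
  set f : ℕ → ℝ := fun i => lam i / (lam i + ν⁻¹) with hf
  -- basic facts about f for i ≥ 1
  have hlampos : ∀ i : ℕ, 1 ≤ i → 0 < lam i := by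
    intro i hi
    have hipos : (0:ℝ) < (i:ℝ) := by exact_mod_cast hi
    calc (0:ℝ) < c * (i:ℝ) ^ (-β) := by positivity
      _ ≤ lam i := hlow i hi
  have hden : ∀ i : ℕ, 1 ≤ i → 0 < lam i + ν⁻¹ := fun i hi => by
    have := hlampos i hi; linarith
  have hf_nonneg : ∀ i : ℕ, 1 ≤ i → 0 ≤ f i := fun i hi =>
    div_nonneg (hlampos i hi).le (hden i hi).le
  have hf_le_one : ∀ i : ℕ, 1 ≤ i → f i ≤ 1 := fun i hi =>
    div_le_one_of_le₀ (by linarith [hνinv]) (hden i hi).le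
  have hf_le : ∀ i : ℕ, 1 ≤ i → f i ≤ C * ν * (i:ℝ) ^ (-β) := by
    intro i hi
    have h1 : f i ≤ lam i / ν⁻¹ := by
      apply div_le_div_of_nonneg_left (hlampos i hi).le hνinv
      linarith [hlampos i hi]
    have h2 : lam i / ν⁻¹ = ν * lam i := by field_simp
    calc f i ≤ ν * lam i := by rw [← h2]; exact h1
      _ ≤ ν * (C * (i:ℝ) ^ (-β)) := by
          apply mul_le_mul_of_nonneg_left (hup i hi) hνpos.le
      _ = C * ν * (i:ℝ) ^ (-β) := by ring
  -- indicator version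
  set F : ℕ → ℝ := fun i => if 1 ≤ i then f i else 0 with hFdef
  have htsub : (∑' i : {i : ℕ // 1 ≤ i}, f i) = ∑' i : ℕ, F i := by
    calc (∑' i : {i : ℕ // 1 ≤ i}, f i) = ∑' i : ↥{i : ℕ | 1 ≤ i}, f i := rfl
      _ = ∑' i : ℕ, Set.indicator {i : ℕ | 1 ≤ i} f i := tsum_subtype _ f
      _ = ∑' i : ℕ, F i := tsum_congr (fun i => by
          by_cases h : 1 ≤ i <;> simp [Set.indicator, h, hFdef])
  have hF_nonneg : ∀ i : ℕ, 0 ≤ F i := by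
    intro i; by_cases h : 1 ≤ i <;> simp [hFdef, h]
    exact hf_nonneg i h
  have hF_bound : ∀ i : ℕ, F i ≤ C * ν * (i:ℝ) ^ (-β) := by
    intro i
    by_cases h : 1 ≤ i
    · simpa [hFdef, h] using hf_le i h
    · have : i = 0 := by omega
      simp [hFdef, h, this, Real.zero_rpow (by linarith : -β ≠ 0)]
  have hsummaj : Summable (fun i : ℕ => C * ν * (i:ℝ) ^ (-β)) :=
    (Real.summable_nat_rpow.2 (by linarith)).mul_left _
  have hFsum : Summable F := Summable.of_nonneg_of_le hF_nonneg hF_bound hsummaj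
  -- parameters
  have hνβ1 : (1:ℝ) ≤ ν ^ (1/β) := by
    have := Real.rpow_le_rpow (by norm_num : (0:ℝ) ≤ 1) hν (by positivity : (0:ℝ) ≤ 1/β)
    simpa using this
  have hνβpos : (0:ℝ) < ν ^ (1/β) := by linarith
  constructor
  · -- LOWER BOUND
    rw [htsub]
    by_cases hcase : c * ν ≤ 2 ^ β
    · -- small ν: use the single term i = 1
      have hl1 : c ≤ lam 1 := by
        have := hlow 1 (le_refl 1); simpa using this
      have hu1 : lam 1 + ν⁻¹ ≤ C + 1 := by
        have := hup 1 (le_refl 1); simp at this; linarith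
      have hf1 : c / (C + 1) ≤ f 1 := by
        apply div_le_div₀ (hlampos 1 (le_refl 1)).le hl1 (hden 1 (le_refl 1)) hu1
      have hterm : c / (C + 1) ≤ F 1 := by simpa [hFdef] using hf1
      have hle_tsum : F 1 ≤ ∑' i : ℕ, F i := Summable.le_tsum hFsum 1 (fun j _ => hF_nonneg j)
      -- ν^{1/β} ≤ 2 * c^{-1/β}
      have hνb : ν ^ (1/β) ≤ 2 / c ^ (1/β) := by
        have h1 : ν ≤ 2 ^ β / c := by
          rw [le_div_iff₀ hc]; linarith [hcase]
        have h2 : ν ^ (1/β) ≤ (2 ^ β / c) ^ (1/β) :=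
          Real.rpow_le_rpow hνpos.le h1 (by positivity)
        have h3 : ((2:ℝ) ^ β / c) ^ (1/β) = 2 / c ^ (1/β) := by
          rw [Real.div_rpow (by positivity) hc.le,
            ← Real.rpow_mul (by norm_num : (0:ℝ) ≤ 2), mul_one_div,
            div_self (by linarith : β ≠ 0), Real.rpow_one]
        rw [h3] at h2; exact h2
      have hcβ : c ^ (1/β) * (c ^ (1/β))⁻¹ = 1 := by
        apply mul_inv_cancel₀
        positivity
      calc min (c ^ (1/β) * c / (2 * (C + 1))) (c ^ (1/β) / 4) * ν ^ (1/β)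
          ≤ (c ^ (1/β) * c / (2 * (C + 1))) * (2 / c ^ (1/β)) := by
            apply mul_le_mul (min_le_left _ _) hνb hνβpos.le (by positivity)
        _ = c / (C + 1) := by
            field_simp
        _ ≤ F 1 := hterm
        _ ≤ ∑' i : ℕ, F i := hle_tsum
    · -- large ν: many terms ≥ 1/2
      push_neg at hcase
      set K : ℝ := (c * ν) ^ (1/β) with hK
      have hcνpos : (0:ℝ) < c * ν := by positivity
      have hK2 : 2 < K := by
        have h2 : ((2:ℝ) ^ β) ^ (1/β) < (c * ν) ^ (1/β) := by
          apply Real.rpow_lt_rpow (by positivity) hcase (by positivity)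
        have h3 : ((2:ℝ) ^ β) ^ (1/β) = 2 := by
          rw [← Real.rpow_mul (by norm_num : (0:ℝ) ≤ 2), mul_one_div,
            div_self (by linarith : β ≠ 0), Real.rpow_one]
        rwa [h3] at h2
      set m : ℕ := ⌊K⌋₊ with hm
      have hm2 : 2 ≤ m := by
        rw [hm]; exact Nat.le_floor (by exact_mod_cast hK2.le)
      have hmK : (m:ℝ) ≤ K := Nat.floor_le (by positivity)
      have hKm : K - 1 < (m:ℝ) := by
        have := Nat.lt_floor_add_one K; linarith
      have hKhalf : K / 2 ≤ (m:ℝ) := by linarith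
      -- each i in Icc 1 m has f i ≥ 1/2
      have hhalf : ∀ i : ℕ, 1 ≤ i → (i:ℝ) ≤ K → 1/2 ≤ f i := by
        intro i hi hiK
        have hipos : (0:ℝ) < (i:ℝ) := by exact_mod_cast hi
        have hiβ : (i:ℝ) ^ β ≤ c * ν := by
          have := Real.rpow_le_rpow hipos.le hiK hβ0.le
          rwa [hK, ← Real.rpow_mul hcνpos.le, one_div,
            inv_mul_cancel₀ (by linarith : β ≠ 0), Real.rpow_one] at this

        have hbpos : (0:ℝ) < (i:ℝ) ^ β := by positivity
        have hgoal : ν⁻¹ * (i:ℝ) ^ β ≤ c := by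
          calc ν⁻¹ * (i:ℝ) ^ β ≤ ν⁻¹ * (c * ν) :=
                mul_le_mul_of_nonneg_left hiβ hνinv.le
            _ = c := by field_simp
        have hinv : ν⁻¹ ≤ c * (i:ℝ) ^ (-β) := by
          have hd : ν⁻¹ ≤ c / (i:ℝ) ^ β := by
            rw [le_div_iff₀ hbpos]; exact hgoal
          rwa [Real.rpow_neg hipos.le, ← div_eq_mul_inv]
        have hli : ν⁻¹ ≤ lam i := le_trans hinv (hlow i hi)
        rw [hf]
        rw [le_div_iff₀ (hden i hi)]
        have := hlampos i hi
        linarith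
      have hsum_lb : (m:ℝ) * (1/2) ≤ ∑' i : ℕ, F i := by
        have hfin : ∑ i ∈ Finset.Icc 1 m, F i ≤ ∑' i : ℕ, F i :=
          Summable.sum_le_tsum _ (fun i _ => hF_nonneg i) hFsum
        have heach : ∀ i ∈ Finset.Icc 1 m, (1:ℝ)/2 ≤ F i := by
          intro i hi
          rw [Finset.mem_Icc] at hi
          have hiK : (i:ℝ) ≤ K := le_trans (by exact_mod_cast hi.2) hmK
          have := hhalf i hi.1 hiK
          simpa [hFdef, hi.1] using this
        calc (m:ℝ) * (1/2) = ∑ _i ∈ Finset.Icc 1 m, (1:ℝ)/2 := by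
              rw [Finset.sum_const, Nat.card_Icc]; simp
          _ ≤ ∑ i ∈ Finset.Icc 1 m, F i := Finset.sum_le_sum heach
          _ ≤ ∑' i : ℕ, F i := hfin
      have hKval : K = c ^ (1/β) * ν ^ (1/β) := by
        rw [hK, Real.mul_rpow hc.le hνpos.le]
      calc min (c ^ (1/β) * c / (2 * (C + 1))) (c ^ (1/β) / 4) * ν ^ (1/β)
          ≤ (c ^ (1/β) / 4) * ν ^ (1/β) := by
            apply mul_le_mul_of_nonneg_right (min_le_right _ _) hνβpos.le
        _ = K / 4 := by rw [hKval]; ring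
        _ ≤ (m:ℝ) * (1/2) := by linarith
        _ ≤ ∑' i : ℕ, F i := hsum_lb
  · -- UPPER BOUND
    rw [htsub]
    set n : ℕ := ⌈ν ^ (1/β)⌉₊ with hn
    have hn1 : 1 ≤ n := Nat.one_le_ceil_iff.2 (by linarith)
    have hnlb : ν ^ (1/β) ≤ (n:ℝ) := Nat.le_ceil _
    have hnub : (n:ℝ) ≤ 2 * ν ^ (1/β) := by
      have := Nat.ceil_lt_add_one (by positivity : (0:ℝ) ≤ ν ^ (1/β))
      have h2 : (n:ℝ) < ν ^ (1/β) + 1 := this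
      linarith
    set G : ℕ → ℝ := fun i => if i ≤ n then 1 else C * ν * (i:ℝ) ^ (-β) with hG
    have hFG : ∀ i : ℕ, F i ≤ G i := by
      intro i
      by_cases h : i ≤ n
      · by_cases h1 : 1 ≤ i
        · simp only [hFdef, hG, if_pos h, if_pos h1]; exact hf_le_one i h1
        · simp [hFdef, hG, h, h1]
      · have h1 : 1 ≤ i := by omega
        simp only [hFdef, hG, if_neg h, if_pos h1]
        exact hf_le i h1
    have hGshift : ∀ i : ℕ, G (i + (n+1)) = C * ν * ((i + n + 1 : ℕ):ℝ) ^ (-β) := by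
      intro i
      have : ¬ (i + (n+1) ≤ n) := by omega
      simp only [hG, if_neg this, Nat.add_assoc]
    have hGshiftsum : Summable (fun i : ℕ => G (i + (n+1))) := by
      have h := (sumShift hβ (n+1)).mul_left (C * ν)
      exact h.congr (fun i => by rw [hGshift i, Nat.add_assoc])
    have hGsum : Summable G := (summable_nat_add_iff (n+1)).1 hGshiftsum
    have hsplit := Summable.sum_add_tsum_nat_add (n+1) hGsum
    have hhead : ∑ i ∈ Finset.range (n+1), G i = (n:ℝ) + 1 := by
      have hone : ∀ i ∈ Finset.range (n+1), G i = 1 := fun i hi => by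
        rw [Finset.mem_range] at hi
        show (if i ≤ n then (1:ℝ) else C * ν * (i:ℝ) ^ (-β)) = 1
        rw [if_pos (by omega : i ≤ n)]
      rw [Finset.sum_congr rfl hone, Finset.sum_const]
      simp
    have htail : (∑' i : ℕ, G (i + (n+1))) ≤ C * ν * ((n:ℝ) ^ (1 - β) / (β - 1)) := by
      calc (∑' i : ℕ, G (i + (n+1)))
          = C * ν * ∑' i : ℕ, ((i + n + 1 : ℕ):ℝ) ^ (-β) := by
            rw [← tsum_mul_left]
            exact tsum_congr hGshift
        _ ≤ C * ν * ((n:ℝ) ^ (1 - β) / (β - 1)) := by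
            apply mul_le_mul_of_nonneg_left (lemA hβ hn1) (by positivity)
    -- ν * n^{1-β} ≤ ν^{1/β}
    have hνn : ν * (n:ℝ) ^ (1 - β) ≤ ν ^ (1/β) := by
      have h1 : (n:ℝ) ^ (1 - β) ≤ (ν ^ (1/β)) ^ (1 - β) :=
        Real.rpow_le_rpow_of_nonpos hνβpos hnlb (by linarith)
      have h2 : (ν ^ (1/β)) ^ (1 - β) = ν ^ (1/β - 1) := by
        rw [← Real.rpow_mul hνpos.le]
        congr 1; field_simp
      have h3 : ν * ν ^ (1/β - 1) = ν ^ (1/β) := by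
        have hne : (1:ℝ) + (1/β - 1) ≠ 0 := by
          have : (1:ℝ) + (1/β - 1) = 1/β := by ring
          rw [this]; positivity
        rw [← Real.rpow_one_add' hνpos.le hne]
        congr 1; ring
      calc ν * (n:ℝ) ^ (1 - β) ≤ ν * ν ^ (1/β - 1) := by
            rw [h2] at h1
            exact mul_le_mul_of_nonneg_left h1 hνpos.le
        _ = ν ^ (1/β) := h3
    calc (∑' i : ℕ, F i) ≤ ∑' i : ℕ, G i := Summable.tsum_le_tsum hFG hFsum hGsum
      _ = ((n:ℝ) + 1) + ∑' i : ℕ, G (i + (n+1)) := by rw [← hsplit, hhead]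
      _ ≤ ((n:ℝ) + 1) + C * ν * ((n:ℝ) ^ (1 - β) / (β - 1)) := by linarith
      _ ≤ 3 * ν ^ (1/β) + (C / (β - 1)) * ν ^ (1/β) := by
          have h1 : (n:ℝ) + 1 ≤ 3 * ν ^ (1/β) := by linarith
          have h2 : C * ν * ((n:ℝ) ^ (1 - β) / (β - 1)) ≤ (C / (β - 1)) * ν ^ (1/β) := by
            have he : C * ν * ((n:ℝ) ^ (1 - β) / (β - 1))
                = (C / (β - 1)) * (ν * (n:ℝ) ^ (1 - β)) := by ring
            rw [he]
            exact mul_le_mul_of_nonneg_left hνn (by positivity)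
          linarith
      _ = (3 + C / (β - 1)) * ν ^ (1/β) := by ring
end

section
/- Cordes inequality: if A and B are positive bounded linear operators on a separable Hilbert space and 0 ≤ s ≤ 1, then ‖A^s B^s‖ ≤ ‖A B‖^s. -/
/-!
If `b` is invertible, `‖a * b‖ ≤ c` says `b * a ^ 2 * b ≤ c ^ 2`, i.e. `a ^ 2 ≤ c ^ 2 • b ^ (-2)`.
By the Löwner–Heinz theorem (`t ↦ t ^ s` is operator monotone for `0 ≤ s ≤ 1`) this gives
`a ^ (2 * s) ≤ c ^ (2 * s) • b ^ (-(2 * s))`, i.e. `b ^ s * a ^ (2 * s) * b ^ s ≤ c ^ (2 * s)`,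
which is `‖a ^ s * b ^ s‖ ≤ c ^ s`. For general `b ≥ 0`, replace `b` by `b + ε` and let `ε → 0`.
-/

open scoped NNReal
open Filter Topology

namespace CFC

variable {A : Type*} [CStarAlgebra A] [PartialOrder A] [StarOrderedRing A]

lemma smul_rpow {r : ℝ} (hr : 0 ≤ r) (a : A) {y : ℝ} (hy : 0 ≤ y) (ha : 0 ≤ a := by cfc_tac) :
    (r • a) ^ y = r ^ y • a ^ y := by
  -- `hy` makes `x ↦ x ^ y` continuous at `0`, which the two `cfc` rewrites need.
  rw [rpow_eq_cfc_real (smul_nonneg hr ha), rpow_eq_cfc_real ha, ← cfc_comp_smul r _ a,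
    ← cfc_smul (r ^ y) (· ^ y) a]
  refine cfc_congr fun x hx => ?_
  simp [Real.mul_rpow hr (spectrum_nonneg_of_nonneg ha hx)]

lemma mul_self_rpow (a : A) {y : ℝ} (hy : 0 ≤ y) (ha : 0 ≤ a := by cfc_tac) :
    (a * a) ^ y = a ^ y * a ^ y := by
  rw [← sq, ← rpow_natCast a 2, rpow_rpow_of_exponent_nonneg a _ _ (by norm_num) hy, mul_comm,
    ← rpow_rpow_of_exponent_nonneg a _ _ hy (by norm_num), rpow_natCast _ 2, sq]

lemma rpow_conjugate_le_iff {b : A} (t : ℝ) {x y : A} (hb : IsStrictlyPositive b := by cfc_tac) :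
    b ^ t * x * b ^ t ≤ y ↔ x ≤ b ^ (-t) * y * b ^ (-t) := by
  have hsa (u : ℝ) : IsSelfAdjoint (b ^ u) := .of_nonneg rpow_nonneg
  constructor
  · intro h
    convert (hsa (-t)).conjugate_le_conjugate h using 1
    simp only [← mul_assoc, rpow_neg_mul_rpow t hb, one_mul]
    simp only [mul_assoc, rpow_mul_rpow_neg t hb, mul_one]
  · intro h
    convert (hsa t).conjugate_le_conjugate h using 1
    simp only [← mul_assoc, rpow_mul_rpow_neg t hb, one_mul]
    simp only [mul_assoc, rpow_neg_mul_rpow t hb, mul_one]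

lemma rpow_conjugate_le_algebraMap_iff {b : A} (t : ℝ) {x : A} {r : ℝ}
    (hb : IsStrictlyPositive b := by cfc_tac) :
    b ^ t * x * b ^ t ≤ algebraMap ℝ A r ↔ x ≤ r • b ^ (-(2 * t)) := by
  rw [rpow_conjugate_le_iff t hb, Algebra.algebraMap_eq_smul_one, mul_smul_comm, mul_one,
    smul_mul_assoc, ← rpow_add hb.isUnit]
  ring_nf

lemma norm_rpow_mul_rpow_le_of_isStrictlyPositive {a b : A} {s : ℝ} (hs : s ∈ Set.Icc 0 1)
    (ha : 0 ≤ a) (hb : IsStrictlyPositive b) : ‖a ^ s * b ^ s‖ ≤ ‖a * b‖ ^ s := by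
  set c := ‖a * b‖
  have hstar : b * (a * a) * b ≤ algebraMap ℝ A (c ^ 2) := by
    simpa [star_mul, ha.isSelfAdjoint.star_eq, hb.isSelfAdjoint.star_eq, mul_assoc] using
      CStarAlgebra.star_mul_le_algebraMap_norm_sq (a := a * b)
  have hsq : a * a ≤ c ^ 2 • b ^ (-2 : ℝ) := by
    simpa using (rpow_conjugate_le_algebraMap_iff 1 hb).1 (by simpa [rpow_one b] using hstar)
  have hpow : (a * a) ^ s ≤ (c ^ 2) ^ s • b ^ (-(2 * s)) :=
    calc (a * a) ^ s ≤ (c ^ 2 • b ^ (-2 : ℝ)) ^ s := rpow_le_rpow hs hsq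
      _ = (c ^ 2) ^ s • b ^ (-(2 * s)) := by
        rw [smul_rpow (by positivity) _ hs.1, rpow_rpow b _ _ (by norm_num), neg_mul]
  have hconj : b ^ s * (a * a) ^ s * b ^ s ≤ algebraMap ℝ A ((c ^ 2) ^ s) :=
    (rpow_conjugate_le_algebraMap_iff s hb).2 hpow
  have hnorm : ‖a ^ s * b ^ s‖ ^ 2 = ‖b ^ s * (a * a) ^ s * b ^ s‖ := by
    rw [sq, ← CStarRing.norm_star_mul_self, star_mul, rpow_nonneg.isSelfAdjoint.star_eq,
      rpow_nonneg.isSelfAdjoint.star_eq, mul_self_rpow a hs.1, mul_assoc, mul_assoc, mul_assoc]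
  refine (pow_le_pow_iff_left₀ (norm_nonneg _) (by positivity) two_ne_zero).1 ?_
  rw [hnorm, Real.rpow_pow_comm (norm_nonneg _)]
  exact (CStarAlgebra.norm_le_iff_le_algebraMap _ (by positivity)
    (conjugate_nonneg_of_nonneg rpow_nonneg rpow_nonneg)).2 hconj

lemma tendsto_add_algebraMap_rpow {b : A} (hb : 0 ≤ b) {s : ℝ} (hs : 0 ≤ s) :
    Tendsto (fun ε : ℝ => (b + algebraMap ℝ A ε) ^ s) (𝓝[>] 0) (𝓝 (b ^ s)) := by
  have hpath : Tendsto (fun ε : ℝ => b + algebraMap ℝ A ε) (𝓝[>] 0) (𝓝[{x | 0 ≤ x}] b) := by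
    refine tendsto_nhdsWithin_iff.2 ⟨?_, ?_⟩
    · have hcont : Continuous fun ε : ℝ => b + algebraMap ℝ A ε := by fun_prop
      simpa using (hcont.tendsto 0).mono_left nhdsWithin_le_nhds
    · filter_upwards [self_mem_nhdsWithin] with ε hε
      exact add_nonneg hb (algebraMap_nonneg A (le_of_lt hε))
  rcases hs.eq_or_lt with rfl | hs
  · rw [rpow_zero b hb]
    refine tendsto_const_nhds.congr' ?_
    filter_upwards [hpath self_mem_nhdsWithin] with ε hε using (rpow_zero _ hε).symm
  · lift s to ℝ≥0 using hs.le
    simp only [← nnrpow_eq_rpow (NNReal.coe_pos.1 hs)]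
    exact ((continuousOn_nnrpow s) b hb).tendsto.comp hpath

theorem norm_rpow_mul_rpow_le {a b : A} {s : ℝ} (hs : s ∈ Set.Icc 0 1) (ha : 0 ≤ a)
    (hb : 0 ≤ b) : ‖a ^ s * b ^ s‖ ≤ ‖a * b‖ ^ s := by
  have hlhs : Tendsto (fun ε : ℝ => ‖a ^ s * (b + algebraMap ℝ A ε) ^ s‖) (𝓝[>] 0)
      (𝓝 ‖a ^ s * b ^ s‖) :=
    ((continuous_norm.comp (continuous_const_mul _)).tendsto _).comp
      (tendsto_add_algebraMap_rpow hb hs.1)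
  have hrhs : Tendsto (fun ε : ℝ => ‖a * (b + algebraMap ℝ A ε)‖ ^ s) (𝓝[>] 0)
      (𝓝 (‖a * b‖ ^ s)) := by
    have hcont : Continuous fun ε : ℝ => ‖a * (b + algebraMap ℝ A ε)‖ ^ s :=
      (Real.continuous_rpow_const hs.1).comp (by fun_prop)
    simpa using (hcont.tendsto 0).mono_left nhdsWithin_le_nhds
  refine le_of_tendsto_of_tendsto hlhs hrhs ?_
  filter_upwards [self_mem_nhdsWithin] with ε hε
  exact norm_rpow_mul_rpow_le_of_isStrictlyPositive hs ha
    (IsStrictlyPositive.nonneg_add hb (isStrictlyPositive_algebraMap hε))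

end CFC

theorem stmt_8_general {H : Type*} [NormedAddCommGroup H] [InnerProductSpace ℂ H] [CompleteSpace H]
    (A B : H →L[ℂ] H) (hA : 0 ≤ A) (hB : 0 ≤ B) (s : ℝ) (hs0 : 0 ≤ s) (hs1 : s ≤ 1) :
    ‖CFC.rpow A s * CFC.rpow B s‖ ≤ ‖A * B‖ ^ s :=
  CFC.norm_rpow_mul_rpow_le ⟨hs0, hs1⟩ hA hB

/-- Cordes inequality: if `A`, `B` are positive bounded operators on a separable Hilbert space
and `0 ≤ s ≤ 1`, then `‖A^s B^s‖ ≤ ‖A B‖^s`. -/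
theorem stmt_8 {H : Type*} [NormedAddCommGroup H] [InnerProductSpace ℂ H] [CompleteSpace H]
    [TopologicalSpace.SeparableSpace H]
    (A B : H →L[ℂ] H) (hA : 0 ≤ A) (hB : 0 ≤ B) (s : ℝ) (hs0 : 0 ≤ s) (hs1 : s ≤ 1) :
    ‖CFC.rpow A s * CFC.rpow B s‖ ≤ ‖A * B‖ ^ s :=
  stmt_8_general A B hA hB s hs0 hs1
end
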